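/- Consider the subsidy-m value function for a two-state arm with active action α: V_m(s) = max( m + r(s) + β·V_m applied to passive dynamics , r(s) + β·[s·V at P^α_{1,1} + (1−s)·V at P^α_{0,1}] ), discount β ∈ (0,1). The set of subsidies m for which passivity is weakly optimal in state s is upward closed: if passivity is weakly optimal at subsidy m, it is weakly optimal at any m' ≥ m. -/
import Mathlib

/-- A convex combination lies between min and max. -/
lemma combo_bounds (θ a b : ℝ) (h0 : 0 ≤ θ) (h1 : θ ≤ 1) :
    min a b ≤ θ * b + (1 - θ) * a ∧ θ * b + (1 - θ) * a ≤ max a b := by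
  rcases le_total a b with h | h
  · rw [min_eq_left h, max_eq_right h]
    constructor <;> nlinarith
  · rw [min_eq_right h, max_eq_left h]
    constructor <;> nlinarith

/-- Arithmetic core of the upward-closedness proof. -/
lemma key_arith (β δ ds dt Cq Cp Ct : ℝ) (hβ0 : 0 < β) (hβ1 : β < 1)
    (hδ : 0 ≤ δ) (hds : 0 ≤ ds) (hdt : 0 ≤ dt)
    (hCq : min ds dt ≤ Cq) (hCp : Cp ≤ max ds dt) (hCt : Ct ≤ max ds dt)
    (h2 : δ + β * Cq < ds) (h3 : ds ≤ β * Cp) (h4 : dt ≤ δ + β * Ct) : False := by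
  rcases le_total dt ds with hc | hc
  · have hCp' : Cp ≤ ds := by rw [max_eq_left hc] at hCp; exact hCp
    have hCq' : 0 ≤ Cq := le_trans (le_min hds hdt) hCq
    nlinarith [mul_le_mul_of_nonneg_left hCp' hβ0.le, mul_nonneg hβ0.le hCq']
  · have hCq' : ds ≤ Cq := by rw [min_eq_left hc] at hCq; exact hCq
    have hCt' : Ct ≤ dt := by rw [max_eq_right hc] at hCt; exact hCt
    nlinarith [mul_le_mul_of_nonneg_left hCq' hβ0.le,
      mul_le_mul_of_nonneg_left hCt' hβ0.le,
      mul_nonneg (by linarith : (0:ℝ) ≤ 1 - β) (by linarith : 0 ≤ dt - ds)]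

set_option maxHeartbeats 1000000 in
/-- For the subsidy-`m` value function `V m` of a two-state arm
(passive transition probabilities to state 1 given by `q`, active ones by `p`),
satisfying the Bellman fixed-point equation and non-decreasing in `m`, the set
of subsidies for which passivity is weakly optimal in a state `s` is upward
closed: if the passive branch attains the max at subsidy `m`, it does so at
any `m' ≥ m`. -/
theorem passivity_upward_closed
    (β : ℝ) (hβ : 0 < β ∧ β < 1)
    (r : Fin 2 → ℝ) (hr : r 0 ≤ r 1)
    (q p : Fin 2 → ℝ)
    (hq : ∀ s, q s ∈ Set.Icc (0 : ℝ) 1) (hp : ∀ s, p s ∈ Set.Icc (0 : ℝ) 1)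
    (V : ℝ → Fin 2 → ℝ)
    (hBell : ∀ m s, V m s =
      max (m + r s + β * (q s * V m 1 + (1 - q s) * V m 0))
          (r s + β * (p s * V m 1 + (1 - p s) * V m 0)))
    (hVmono : ∀ s, Monotone (fun m => V m s))
    (s : Fin 2) (m m' : ℝ) (hmm' : m ≤ m')
    (hpassive : r s + β * (p s * V m 1 + (1 - p s) * V m 0) ≤
      m + r s + β * (q s * V m 1 + (1 - q s) * V m 0)) :
    r s + β * (p s * V m' 1 + (1 - p s) * V m' 0) ≤
      m' + r s + β * (q s * V m' 1 + (1 - q s) * V m' 0) := by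
  obtain ⟨hβ0, hβ1⟩ := hβ
  by_contra h
  push_neg at h
  have hδ : (0:ℝ) ≤ m' - m := by linarith
  have hd0 : 0 ≤ V m' 0 - V m 0 := sub_nonneg.mpr (hVmono 0 hmm')
  have hd1 : 0 ≤ V m' 1 - V m 1 := sub_nonneg.mpr (hVmono 1 hmm')
  have hVms : V m s = m + r s + β * (q s * V m 1 + (1 - q s) * V m 0) :=
    (hBell m s).trans (max_eq_left hpassive)
  have hVm's : V m' s = r s + β * (p s * V m' 1 + (1 - p s) * V m' 0) :=
    (hBell m' s).trans (max_eq_right h.le)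
  have hge : m' + r s + β * (q s * V m' 1 + (1 - q s) * V m' 0) < V m' s :=
    h.trans_le ((le_max_right _ _).trans (hBell m' s).ge)
  have hA : r s + β * (p s * V m 1 + (1 - p s) * V m 0) ≤ V m s :=
    (le_max_right _ _).trans (hBell m s).ge
  have h4 : ∀ t : Fin 2, V m' t - V m t ≤
      (m' - m) + β * max (q t * (V m' 1 - V m 1) + (1 - q t) * (V m' 0 - V m 0))
        (p t * (V m' 1 - V m 1) + (1 - p t) * (V m' 0 - V m 0)) := by
    intro t
    rcases max_choice (m' + r t + β * (q t * V m' 1 + (1 - q t) * V m' 0))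
        (r t + β * (p t * V m' 1 + (1 - p t) * V m' 0)) with hc | hc
    · have hVt : V m' t = m' + r t + β * (q t * V m' 1 + (1 - q t) * V m' 0) :=
        (hBell m' t).trans hc
      have hVtm : m + r t + β * (q t * V m 1 + (1 - q t) * V m 0) ≤ V m t :=
        (le_max_left _ _).trans (hBell m t).ge
      have hmax := le_max_left (q t * (V m' 1 - V m 1) + (1 - q t) * (V m' 0 - V m 0))
        (p t * (V m' 1 - V m 1) + (1 - p t) * (V m' 0 - V m 0))
      nlinarith [mul_le_mul_of_nonneg_left hmax hβ0.le]
    · have hVt : V m' t = r t + β * (p t * V m' 1 + (1 - p t) * V m' 0) :=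
        (hBell m' t).trans hc
      have hVtm : r t + β * (p t * V m 1 + (1 - p t) * V m 0) ≤ V m t :=
        (le_max_right _ _).trans (hBell m t).ge
      have hmax := le_max_right (q t * (V m' 1 - V m 1) + (1 - q t) * (V m' 0 - V m 0))
        (p t * (V m' 1 - V m 1) + (1 - p t) * (V m' 0 - V m 0))
      nlinarith [mul_le_mul_of_nonneg_left hmax hβ0.le]
  have hCmax : ∀ t : Fin 2,
      max (q t * (V m' 1 - V m 1) + (1 - q t) * (V m' 0 - V m 0))
        (p t * (V m' 1 - V m 1) + (1 - p t) * (V m' 0 - V m 0))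
        ≤ max (V m' 0 - V m 0) (V m' 1 - V m 1) := by
    intro t
    exact max_le (combo_bounds (q t) _ _ (hq t).1 (hq t).2).2
      (combo_bounds (p t) _ _ (hp t).1 (hp t).2).2
  have hs : s = 0 ∨ s = 1 := by omega
  rcases hs with hs | hs <;> subst hs
  · -- s = 0
    refine key_arith β (m' - m) (V m' 0 - V m 0) (V m' 1 - V m 1)
      (q 0 * (V m' 1 - V m 1) + (1 - q 0) * (V m' 0 - V m 0))
      (p 0 * (V m' 1 - V m 1) + (1 - p 0) * (V m' 0 - V m 0))
      (max (q 1 * (V m' 1 - V m 1) + (1 - q 1) * (V m' 0 - V m 0))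
        (p 1 * (V m' 1 - V m 1) + (1 - p 1) * (V m' 0 - V m 0)))
      hβ0 hβ1 hδ hd0 hd1
      (combo_bounds (q 0) _ _ (hq 0).1 (hq 0).2).1
      (combo_bounds (p 0) _ _ (hp 0).1 (hp 0).2).2
      (hCmax 1) ?_ ?_ (h4 1)
    · nlinarith [hge, hVms]
    · nlinarith [hVm's, hA]
  · -- s = 1
    refine key_arith β (m' - m) (V m' 1 - V m 1) (V m' 0 - V m 0)
      (q 1 * (V m' 1 - V m 1) + (1 - q 1) * (V m' 0 - V m 0))
      (p 1 * (V m' 1 - V m 1) + (1 - p 1) * (V m' 0 - V m 0))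
      (max (q 0 * (V m' 1 - V m 1) + (1 - q 0) * (V m' 0 - V m 0))
        (p 0 * (V m' 1 - V m 1) + (1 - p 0) * (V m' 0 - V m 0)))
      hβ0 hβ1 hδ hd1 hd0
      (min_comm (V m' 1 - V m 1) (V m' 0 - V m 0) ▸
        (combo_bounds (q 1) _ _ (hq 1).1 (hq 1).2).1)
      (max_comm (V m' 0 - V m 0) (V m' 1 - V m 1) ▸
        (combo_bounds (p 1) _ _ (hp 1).1 (hp 1).2).2)
      (max_comm (V m' 0 - V m 0) (V m' 1 - V m 1) ▸ hCmax 0) ?_ ?_ (h4 0)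
    · nlinarith [hge, hVms]
    · nlinarith [hVm's, hA]
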